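/- Let A, B be positive invertible operators with mI ≤ A, B ≤ MI (0 < m ≤ M) and α ∈ [0,1]. Then λ^{-1}(A ∇_α B) ≤ A ♯ B ≤ λ(A !_α B), where λ = (1-α)√(m/M) + α√(M/m) if α ≥ 1/2, and λ = (1-α)√(M/m) + α√(m/M) if α ≤ 1/2. -/

import Mathlib

open scoped ComplexOrder

/-- `A ^ r` for a Hermitian matrix, via the continuous functional calculus. -/
noncomputable def mpow {n : ℕ} (A : Matrix (Fin n) (Fin n) ℂ) (r : ℝ) : Matrix (Fin n) (Fin n) ℂ :=
  cfc (fun x : ℝ => x ^ r) A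

/-- The β-weighted operator geometric mean `A ♯_β B = A^{1/2}(A^{-1/2} B A^{-1/2})^β A^{1/2}`. -/
noncomputable def geomMean {n : ℕ} (A B : Matrix (Fin n) (Fin n) ℂ) (β : ℝ) :
    Matrix (Fin n) (Fin n) ℂ :=
  mpow A (1/2) * mpow (mpow A (-(1/2)) * B * mpow A (-(1/2))) β * mpow A (1/2)

/-- The α-weighted operator harmonic mean `A !_α B = ((1-α)A⁻¹ + αB⁻¹)⁻¹`. -/
noncomputable def harmMean {n : ℕ} (A B : Matrix (Fin n) (Fin n) ℂ) (α : ℝ) :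
    Matrix (Fin n) (Fin n) ℂ :=
  ((1 - α) • A⁻¹ + α • B⁻¹)⁻¹

/-!
With `C = A^{-1/2} B A^{-1/2}`, each of the three means is a congruence `A^{1/2} f(C) A^{1/2}`:
`f x = (1-α) + α x` for `∇_α`, `f x = √x` for `♯` and `f x = ((1-α) + α/x)⁻¹` for `!_α`.
Congruence and the functional calculus are monotone, so both inequalities reduce to scalar
inequalities on the spectrum of `C`, which lies in `[m/M, M/m]`. Writing `t = √x ∈ [s, s⁻¹]` with
`s = √(m/M)`, they become `(1-α)/t + αt ≤ λ` and `(1-α)t + α/t ≤ λ`; both left-hand sides are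
convex in `t`, hence bounded by their values at `t = s, s⁻¹`, and the larger of these is `λ`.
-/

open scoped MatrixOrder
open Matrix

lemma div_add_mul_le_of_mem_Icc {a b c s t : ℝ} (ha : 0 ≤ a) (hs : 0 < s) (hst : s ≤ t)
    (hts : t ≤ s⁻¹) (hcs : a * s⁻¹ + b * s ≤ c) (hcs' : a * s + b * s⁻¹ ≤ c) :
    a * t⁻¹ + b * t ≤ c := by
  have ht : 0 < t := hs.trans_le hst
  have hss : s * s⁻¹ = 1 := mul_inv_cancel₀ hs.ne'
  -- the chord of `t ↦ t⁻¹` between `s` and `s⁻¹` is `t ↦ s + s⁻¹ - t`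
  have hchord : t⁻¹ ≤ s + s⁻¹ - t := by
    rw [inv_le_iff_one_le_mul₀ ht]
    nlinarith
  have hachord := mul_le_mul_of_nonneg_left hchord ha
  -- `a (s + s⁻¹ - t) + b t` is affine in `t`, so it is bounded by its value at an endpoint
  rcases le_total a b with hab | hab
  · nlinarith [mul_le_mul_of_nonneg_left hts (sub_nonneg.2 hab)]
  · nlinarith [mul_le_mul_of_nonneg_left hst (sub_nonneg.2 hab)]

lemma weighted_endpoints_le_ite_half {s α : ℝ} (hs : 0 < s) (hs1 : s ≤ 1) :
    (1 - α) * s⁻¹ + α * s ≤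
        (if (1:ℝ)/2 ≤ α then (1 - α) * s + α * s⁻¹ else (1 - α) * s⁻¹ + α * s) ∧
      (1 - α) * s + α * s⁻¹ ≤
        (if (1:ℝ)/2 ≤ α then (1 - α) * s + α * s⁻¹ else (1 - α) * s⁻¹ + α * s) := by
  have : s ≤ s⁻¹ := hs1.trans (one_le_inv₀ hs |>.2 hs1)
  split_ifs with h <;> constructor <;> nlinarith

lemma mean_bounds_of_sqrt_mem_Icc {s α L x : ℝ} (hs : 0 < s) (hsx : s ≤ √x) (hxs : √x ≤ s⁻¹)
    (hα0 : 0 ≤ α) (hα1 : α ≤ 1) (hL : (1 - α) * s⁻¹ + α * s ≤ L)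
    (hL' : (1 - α) * s + α * s⁻¹ ≤ L) :
    L⁻¹ * ((1 - α) + α * x) ≤ x ^ (1/2 : ℝ) ∧ x ^ (1/2 : ℝ) ≤ L * ((1 - α) + α * x⁻¹)⁻¹ := by
  set t := √x
  have ht : 0 < t := hs.trans_le hsx
  have hx : x = t ^ 2 := (Real.sq_sqrt (Real.sqrt_pos.1 ht).le).symm
  have hLpos : 0 < L := by
    have := inv_pos.2 hs
    rcases eq_or_lt_of_le hα0 with rfl | hα <;> nlinarith
  have h₁ := div_add_mul_le_of_mem_Icc (by linarith) hs hsx hxs hL hL'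
  have h₂ := div_add_mul_le_of_mem_Icc (b := 1 - α) (c := L) hα0 hs hsx hxs
    (by linarith) (by linarith)
  rw [← Real.sqrt_eq_rpow, hx, Real.sqrt_sq ht.le]
  constructor
  · rw [inv_mul_le_iff₀ hLpos]
    calc (1 - α) + α * t ^ 2 = ((1 - α) * t⁻¹ + α * t) * t := by field_simp
      _ ≤ L * t := by gcongr
  · have hpos : 0 < (1 - α) + α * (t ^ 2)⁻¹ := by
      rcases hα1.lt_or_eq with hα | rfl
      · exact add_pos_of_pos_of_nonneg (by linarith) (by positivity)
      · simpa using pow_pos ht 2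
    rw [← div_eq_mul_inv, le_div_iff₀ hpos]
    calc t * ((1 - α) + α * (t ^ 2)⁻¹) = α * t⁻¹ + (1 - α) * t := by field_simp; ring
      _ ≤ L := h₂

section cfc

variable {ι 𝕜 : Type*} [Fintype ι] [DecidableEq ι] [RCLike 𝕜]

lemma Matrix.inv_conj_eq {K : Type*} [CommRing K] {S T : Matrix ι ι K} (hST : S * T = 1)
    (X : Matrix ι ι K) : (S * X * S)⁻¹ = T * X⁻¹ * T := by
  rw [Matrix.mul_inv_rev, Matrix.mul_inv_rev, Matrix.inv_eq_right_inv hST, mul_assoc]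

lemma Matrix.continuousOn_spectrum (f : ℝ → ℝ) (C : Matrix ι ι 𝕜) :
    ContinuousOn f (spectrum ℝ C) :=
  C.finite_real_spectrum.continuousOn f

lemma Matrix.cfc_const_add_const_mul {C : Matrix ι ι 𝕜} (hC : C.IsHermitian) (a b : ℝ)
    (f : ℝ → ℝ) : cfc (fun x => a + b * f x) C = a • 1 + b • cfc f C := by
  rw [cfc_const_add a (fun x => b * f x) C (continuousOn_spectrum _ C) hC.isSelfAdjoint,
    cfc_const_mul b f C (continuousOn_spectrum _ C), Algebra.algebraMap_eq_smul_one]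

lemma Matrix.smul_conj_cfc (S C : Matrix ι ι 𝕜) (c : ℝ) (f : ℝ → ℝ) :
    c • (S * cfc f C * S) = S * cfc (fun x => c * f x) C * S := by
  rw [cfc_const_mul c f C (continuousOn_spectrum _ C), mul_smul_comm, smul_mul_assoc]

lemma Matrix.conj_cfc_mono {S C : Matrix ι ι 𝕜} (hS : S.IsHermitian) {f g : ℝ → ℝ}
    (hfg : ∀ x ∈ spectrum ℝ C, f x ≤ g x) : S * cfc f C * S ≤ S * cfc g C * S :=
  IsSelfAdjoint.conjugate_le_conjugate
    (cfc_mono hfg (continuousOn_spectrum _ C) (continuousOn_spectrum _ C)) hS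

end cfc

section mpow

variable {n : ℕ} {A : Matrix (Fin n) (Fin n) ℂ}

lemma isHermitian_mpow (A : Matrix (Fin n) (Fin n) ℂ) (r : ℝ) : (mpow A r).IsHermitian :=
  cfc_predicate _ A

lemma mpow_zero (hA : A.IsHermitian) : mpow A 0 = 1 := by
  simp only [mpow, Real.rpow_zero]
  exact cfc_const_one ℝ A hA

lemma mpow_one (hA : A.IsHermitian) : mpow A 1 = A := by
  simp only [mpow, Real.rpow_one]
  exact cfc_id' ℝ A hA

lemma mpow_mul_mpow (hA : A.PosDef) (r s : ℝ) : mpow A r * mpow A s = mpow A (r + s) := by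
  rw [mpow, mpow, ← cfc_mul _ _ A (continuousOn_spectrum _ A) (continuousOn_spectrum _ A)]
  refine cfc_congr fun x hx => (Real.rpow_add ?_ r s).symm
  exact hA.isStrictlyPositive.spectrum_pos hx

lemma mpow_half_mul_mpow_neg_half (hA : A.PosDef) : mpow A (1/2) * mpow A (-(1/2)) = 1 := by
  rw [mpow_mul_mpow hA, add_neg_cancel, mpow_zero hA.isHermitian]

lemma mpow_neg_half_mul_mpow_half (hA : A.PosDef) : mpow A (-(1/2)) * mpow A (1/2) = 1 := by
  rw [mpow_mul_mpow hA, neg_add_cancel, mpow_zero hA.isHermitian]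

lemma mpow_half_mul_mpow_half (hA : A.PosDef) : mpow A (1/2) * mpow A (1/2) = A := by
  rw [mpow_mul_mpow hA, add_halves, mpow_one hA.isHermitian]

lemma mpow_neg_half_mul_mul_mpow_neg_half (hA : A.PosDef) :
    mpow A (-(1/2)) * A * mpow A (-(1/2)) = 1 := by
  nth_rw 2 [← mpow_one hA.isHermitian]
  rw [mpow_mul_mpow hA, mpow_mul_mpow hA]
  norm_num [mpow_zero hA.isHermitian]

end mpow

section invSqrtConj

variable {n : ℕ} {A B : Matrix (Fin n) (Fin n) ℂ}

noncomputable def invSqrtConj (A B : Matrix (Fin n) (Fin n) ℂ) : Matrix (Fin n) (Fin n) ℂ :=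
  mpow A (-(1/2)) * B * mpow A (-(1/2))

lemma geomMean_eq (A B : Matrix (Fin n) (Fin n) ℂ) (β : ℝ) :
    geomMean A B β = mpow A (1/2) * mpow (invSqrtConj A B) β * mpow A (1/2) := rfl

lemma isHermitian_invSqrtConj (hB : B.IsHermitian) : (invSqrtConj A B).IsHermitian := by
  simpa [invSqrtConj, (isHermitian_mpow A _).eq, mul_assoc] using
    isHermitian_conjTranspose_mul_mul (mpow A (-(1/2))) hB

lemma mpow_half_mul_invSqrtConj_mul (hA : A.PosDef) (B : Matrix (Fin n) (Fin n) ℂ) :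
    mpow A (1/2) * invSqrtConj A B * mpow A (1/2) = B := by
  simp only [invSqrtConj, ← mul_assoc, mpow_half_mul_mpow_neg_half hA, one_mul]
  rw [mul_assoc, mpow_neg_half_mul_mpow_half hA, mul_one]

lemma posDef_invSqrtConj (hA : A.PosDef) (hB : B.PosDef) : (invSqrtConj A B).PosDef := by
  exact (IsStrictlyPositive.conjugate_of_isUnit_of_isSelfAdjoint B _
    (IsUnit.of_mul_eq_one _ (mpow_neg_half_mul_mpow_half hA)) (isHermitian_mpow A _)
    hB.isStrictlyPositive).posDef

lemma smul_one_le_invSqrtConj (hA : A.PosDef) {c d : ℝ} (hc : 0 ≤ c) (hd : 0 < d)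
    (hAd : A ≤ d • 1) (hBc : c • 1 ≤ B) : (c / d) • 1 ≤ invSqrtConj A B := by
  set T := mpow A (-(1/2))
  have hT : IsSelfAdjoint T := isHermitian_mpow A _
  calc (c / d) • (1 : Matrix (Fin n) (Fin n) ℂ) = (c / d) • (T * A * T) := by
        rw [mpow_neg_half_mul_mul_mpow_neg_half hA]
    _ ≤ (c / d) • (T * (d • 1) * T) :=
        smul_le_smul_of_nonneg_left (hT.conjugate_le_conjugate hAd) (by positivity)
    _ = T * (c • 1) * T := by
        simp only [mul_smul_comm, smul_mul_assoc, smul_smul, div_mul_cancel₀ c hd.ne']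
    _ ≤ invSqrtConj A B := hT.conjugate_le_conjugate hBc

lemma invSqrtConj_le_smul_one (hA : A.PosDef) {c d : ℝ} (hc : 0 < c) (hd : 0 ≤ d)
    (hAc : c • 1 ≤ A) (hBd : B ≤ d • 1) : invSqrtConj A B ≤ (d / c) • 1 := by
  set T := mpow A (-(1/2))
  have hT : IsSelfAdjoint T := isHermitian_mpow A _
  calc invSqrtConj A B ≤ T * (d • 1) * T := hT.conjugate_le_conjugate hBd
    _ = (d / c) • (T * (c • 1) * T) := by
        simp only [mul_smul_comm, smul_mul_assoc, smul_smul, div_mul_cancel₀ d hc.ne']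
    _ ≤ (d / c) • (T * A * T) :=
        smul_le_smul_of_nonneg_left (hT.conjugate_le_conjugate hAc) (by positivity)
    _ = (d / c) • 1 := by rw [mpow_neg_half_mul_mul_mpow_neg_half hA]

lemma smul_add_smul_eq_conj_cfc (hA : A.PosDef) (hB : B.IsHermitian) (a b : ℝ) :
    a • A + b • B =
      mpow A (1/2) * cfc (fun x => a + b * x) (invSqrtConj A B) * mpow A (1/2) := by
  have hC := isHermitian_invSqrtConj (A := A) hB
  rw [cfc_const_add_const_mul hC a b (fun x => x), cfc_id' ℝ _ hC.isSelfAdjoint]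
  simp only [mul_add, add_mul, mul_smul_comm, smul_mul_assoc, mul_one,
    mpow_half_mul_mpow_half hA, mpow_half_mul_invSqrtConj_mul hA]

lemma harmMean_eq_conj_cfc (hA : A.PosDef) (hB : B.PosDef) {α : ℝ} (hα0 : 0 ≤ α)
    (hα1 : α ≤ 1) :
    harmMean A B α = mpow A (1/2) *
      cfc (fun x => ((1 - α) + α * x⁻¹)⁻¹) (invSqrtConj A B) * mpow A (1/2) := by
  set S := mpow A (1/2)
  set T := mpow A (-(1/2))
  set C := invSqrtConj A B
  have hC := posDef_invSqrtConj hA hB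
  have hCpos : ∀ x ∈ spectrum ℝ C, 0 < x := fun x hx => hC.isStrictlyPositive.spectrum_pos hx
  have hAinv : A⁻¹ = T * T := by
    conv_lhs => rw [← mpow_half_mul_mpow_half hA]
    rw [Matrix.mul_inv_rev, Matrix.inv_eq_right_inv (mpow_half_mul_mpow_neg_half hA)]
  have hBinv : B⁻¹ = T * C⁻¹ * T := by
    conv_lhs => rw [← mpow_half_mul_invSqrtConj_mul hA B]
    exact inv_conj_eq (mpow_half_mul_mpow_neg_half hA) _
  have hCinv : C⁻¹ = cfc (fun x : ℝ => x⁻¹) C := by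
    rw [nonsing_inv_eq_ringInverse, cfc_ringInverse_id _ hC.isUnit hC.isHermitian.isSelfAdjoint]
  have hD : (1 - α) • A⁻¹ + α • B⁻¹ = T * cfc (fun x => (1 - α) + α * x⁻¹) C * T := by
    rw [cfc_const_add_const_mul hC.isHermitian _ _ (fun x : ℝ => x⁻¹), ← hCinv, hAinv, hBinv]
    simp only [mul_add, add_mul, mul_smul_comm, smul_mul_assoc, mul_one]
  have hg_ne : ∀ x ∈ spectrum ℝ C, (1 - α) + α * x⁻¹ ≠ 0 := by
    intro x hx
    have := inv_pos.2 (hCpos x hx)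
    rcases hα1.lt_or_eq with hα | rfl
    · exact (add_pos_of_pos_of_nonneg (by linarith) (by positivity)).ne'
    · simpa using this.ne'
  rw [harmMean, hD, inv_conj_eq (mpow_neg_half_mul_mpow_half hA), nonsing_inv_eq_ringInverse,
    ← cfc_inv _ C hg_ne (continuousOn_spectrum _ C) hC.isHermitian.isSelfAdjoint]

end invSqrtConj

/-- For `mI ≤ A, B ≤ MI` and `α ∈ [0,1]`: `λ⁻¹(A ∇_α B) ≤ A ♯ B ≤ λ(A !_α B)` with
`λ = (1-α)√(m/M) + α√(M/m)` if `α ≥ 1/2`, and `λ = (1-α)√(M/m) + α√(m/M)` if `α ≤ 1/2`. -/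
theorem geom_sandwich_half {n : ℕ} (A B : Matrix (Fin n) (Fin n) ℂ) (m M α : ℝ)
    (hA : A.PosDef) (hB : B.PosDef) (hm : 0 < m) (hmM : m ≤ M)
    (hAm : (A - m • (1 : Matrix (Fin n) (Fin n) ℂ)).PosSemidef)
    (hAM : (M • (1 : Matrix (Fin n) (Fin n) ℂ) - A).PosSemidef)
    (hBm : (B - m • (1 : Matrix (Fin n) (Fin n) ℂ)).PosSemidef)
    (hBM : (M • (1 : Matrix (Fin n) (Fin n) ℂ) - B).PosSemidef)
    (hα0 : 0 ≤ α) (hα1 : α ≤ 1) :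
    (geomMean A B (1/2) -
        (if (1:ℝ)/2 ≤ α then (1 - α) * Real.sqrt (m / M) + α * Real.sqrt (M / m)
         else (1 - α) * Real.sqrt (M / m) + α * Real.sqrt (m / M))⁻¹
          • ((1 - α) • A + α • B)).PosSemidef ∧
    ((if (1:ℝ)/2 ≤ α then (1 - α) * Real.sqrt (m / M) + α * Real.sqrt (M / m)
      else (1 - α) * Real.sqrt (M / m) + α * Real.sqrt (m / M))
        • harmMean A B α - geomMean A B (1/2)).PosSemidef := by
  have hM : 0 < M := hm.trans_le hmM
  set s := √(m / M)
  have hs : 0 < s := Real.sqrt_pos.2 (div_pos hm hM)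
  have hs_inv : √(M / m) = s⁻¹ := by rw [← Real.sqrt_inv, inv_div]
  have hs1 : s ≤ 1 := Real.sqrt_le_one.2 ((div_le_one hM).2 hmM)
  obtain ⟨hL, hL'⟩ := weighted_endpoints_le_ite_half (α := α) hs hs1
  rw [hs_inv]
  have hspec : ∀ x ∈ spectrum ℝ (invSqrtConj A B), s ≤ √x ∧ √x ≤ s⁻¹ := by
    have hC := (isHermitian_invSqrtConj (A := A) hB.isHermitian).isSelfAdjoint
    have hlow := smul_one_le_invSqrtConj hA hm.le hM hAM hBm
    have hup := invSqrtConj_le_smul_one hA hm hM.le hAm hBM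
    rw [← Algebra.algebraMap_eq_smul_one, algebraMap_le_iff_le_spectrum hC] at hlow
    rw [← Algebra.algebraMap_eq_smul_one, le_algebraMap_iff_spectrum_le hC] at hup
    exact fun x hx => ⟨Real.sqrt_le_sqrt (hlow x hx), hs_inv ▸ Real.sqrt_le_sqrt (hup x hx)⟩
  have hmeans x (hx : x ∈ spectrum ℝ (invSqrtConj A B)) :=
    mean_bounds_of_sqrt_mem_Icc hs (hspec x hx).1 (hspec x hx).2 hα0 hα1 hL hL'
  rw [← Matrix.le_iff, ← Matrix.le_iff, smul_add_smul_eq_conj_cfc hA hB.isHermitian,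
    harmMean_eq_conj_cfc hA hB hα0 hα1, geomMean_eq, smul_conj_cfc, smul_conj_cfc]
  exact ⟨conj_cfc_mono (isHermitian_mpow A _) fun x hx => (hmeans x hx).1,
    conj_cfc_mono (isHermitian_mpow A _) fun x hx => (hmeans x hx).2⟩
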